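/- arXiv:1804.04529 — 4 statements merged into one kernel-verified Lean document; each statement's English description precedes it below -/
import Mathlib

section
/- Let X ⊆ ℝ^d be compact and convex with Euclidean diameter diam(X), and let ℓ_1, …, ℓ_T : X → ℝ be convex and differentiable with ‖∇ℓ_t(x)‖ ≤ L for all x ∈ X and all t. Then the online gradient descent iterates with step-size γ = diam(X)/(L√T) satisfy the regret bound R_T = Σ_{t=1}^T ℓ_t(x_t) − min_{x∈X} Σ_{t=1}^T ℓ_t(x) ≤ diam(X) · L · √T. -/
/-!
Convexity linearizes the regret: `ℓ_t(x_t) - ℓ_t(z) ≤ ⟪∇ℓ_t(x_t), x_t - z⟫`. Projecting onto a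
convex set does not increase the distance to any of its points, so
`‖x_{t+1} - z‖² ≤ ‖x_t - z‖² - 2γ⟪∇ℓ_t(x_t), x_t - z⟫ + γ²L²`. Summing over `t` telescopes to
`2γ · (linearized regret) ≤ diam(X)² + γ²TL²`, and for `γ = diam(X)/(L√T)` the right-hand side
is `2γ · diam(X) L √T`.
-/

open Set Finset
open scoped RealInnerProductSpace

theorem ConvexOn.le_sub_of_hasFDerivWithinAt {E : Type*} [NormedAddCommGroup E]
    [NormedSpace ℝ E] {s : Set E} {f : E → ℝ} {f' : E →L[ℝ] ℝ} {x z : E}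
    (hf : ConvexOn ℝ s f) (hx : x ∈ s) (hz : z ∈ s) (hf' : HasFDerivWithinAt f f' s x) :
    f' (z - x) ≤ f z - f x := by
  let c : ℝ →ᵃ[ℝ] E := AffineMap.lineMap x z
  have hc : MapsTo c (Icc 0 1) s := hf.1.mapsTo_lineMap hx hz
  have hfc : ConvexOn ℝ (Icc 0 1) (f ∘ c) := (hf.comp_affineMap c).subset hc (convex_Icc 0 1)
  have hfc' : HasDerivWithinAt (f ∘ c) (f' (z - x)) (Icc 0 1) 0 :=
    (by simpa [c] using hf' : HasFDerivWithinAt f f' s (c 0)).comp_hasDerivWithinAt 0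
      AffineMap.hasDerivWithinAt_lineMap hc
  simpa [c, slope_def_field] using
    hfc.le_slope_of_hasDerivWithinAt (left_mem_Icc.2 zero_le_one) (right_mem_Icc.2 zero_le_one)
      zero_lt_one hfc'

theorem ConvexOn.sub_le_inner_of_hasGradientWithinAt {F : Type*} [NormedAddCommGroup F]
    [InnerProductSpace ℝ F] [CompleteSpace F] {s : Set F} {f : F → ℝ} {g x z : F}
    (hf : ConvexOn ℝ s f) (hx : x ∈ s) (hz : z ∈ s) (hg : HasGradientWithinAt f g s x) :
    f x - f z ≤ ⟪g, x - z⟫ := by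
  have := hf.le_sub_of_hasFDerivWithinAt hx hz hg.hasFDerivWithinAt
  rw [InnerProductSpace.toDual_apply_apply, ← neg_sub x z, inner_neg_right] at this
  linarith

section ProjectedGradientIterates

variable {F : Type*} [NormedAddCommGroup F] [InnerProductSpace ℝ F] {K : Set F}

theorem norm_sub_le_of_forall_norm_sub_le (hK : Convex ℝ K) {y p z : F} (hp : p ∈ K)
    (hmin : ∀ w ∈ K, ‖y - p‖ ≤ ‖y - w‖) (hz : z ∈ K) : ‖p - z‖ ≤ ‖y - z‖ := by
  have : Nonempty K := ⟨⟨p, hp⟩⟩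
  have hinf : ‖y - p‖ = ⨅ w : K, ‖y - w‖ :=
    le_antisymm (le_ciInf fun w => hmin w w.2)
      (ciInf_le (f := fun w : K => ‖y - w‖) ⟨0, forall_mem_range.2 fun _ => norm_nonneg _⟩
        ⟨p, hp⟩)
  have hvar : ⟪y - p, z - p⟫ ≤ 0 := (norm_eq_iInf_iff_real_inner_le_zero hK hp).mp hinf z hz
  have hsq : ‖y - z‖ ^ 2 = ‖y - p‖ ^ 2 - 2 * ⟪y - p, z - p⟫ + ‖z - p‖ ^ 2 := by
    rw [← norm_sub_sq_real, sub_sub_sub_cancel_right]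
  rw [norm_sub_rev p z]
  nlinarith [sq_nonneg ‖y - p‖, norm_nonneg (z - p), norm_nonneg (y - z)]

theorem two_mul_inner_le_of_projected_step (hK : Convex ℝ K) {x v p z : F} {γ : ℝ}
    (hp : p ∈ K) (hmin : ∀ w ∈ K, ‖x - γ • v - p‖ ≤ ‖x - γ • v - w‖) (hz : z ∈ K) :
    2 * γ * ⟪v, x - z⟫ ≤ ‖x - z‖ ^ 2 - ‖p - z‖ ^ 2 + γ ^ 2 * ‖v‖ ^ 2 := by
  have hexp : ‖x - γ • v - z‖ ^ 2 = ‖x - z‖ ^ 2 - 2 * γ * ⟪v, x - z⟫ + γ ^ 2 * ‖v‖ ^ 2 := by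
    rw [sub_right_comm, norm_sub_sq_real, real_inner_smul_right, norm_smul, mul_pow,
      Real.norm_eq_abs, sq_abs, real_inner_comm]
    ring
  have := pow_le_pow_left₀ (norm_nonneg _) (norm_sub_le_of_forall_norm_sub_le hK hp hmin hz) 2
  linarith

variable {proj : F → F} {x v : ℕ → F} {γ : ℝ}

theorem projected_iterates_mem (hproj : ∀ y, proj y ∈ K ∧ ∀ z ∈ K, ‖y - proj y‖ ≤ ‖y - z‖)
    (hrec : ∀ t, x (t + 1) = proj (x t - γ • v t)) (hx0 : x 0 ∈ K) : ∀ t, x t ∈ K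
  | 0 => hx0
  | t + 1 => hrec t ▸ (hproj _).1

theorem two_mul_sum_inner_le_of_projected_iterates (hK : Convex ℝ K)
    (hproj : ∀ y, proj y ∈ K ∧ ∀ z ∈ K, ‖y - proj y‖ ≤ ‖y - z‖)
    (hrec : ∀ t, x (t + 1) = proj (x t - γ • v t)) {z : F} (hz : z ∈ K) (T : ℕ) :
    2 * γ * ∑ t ∈ range T, ⟪v t, x t - z⟫ ≤
      ‖x 0 - z‖ ^ 2 + γ ^ 2 * ∑ t ∈ range T, ‖v t‖ ^ 2 := by
  have hstep (t : ℕ) :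
      2 * γ * ⟪v t, x t - z⟫ ≤ ‖x t - z‖ ^ 2 - ‖x (t + 1) - z‖ ^ 2 + γ ^ 2 * ‖v t‖ ^ 2 := by
    rw [hrec t]
    exact two_mul_inner_le_of_projected_step hK (hproj _).1 (hproj _).2 hz
  calc 2 * γ * ∑ t ∈ range T, ⟪v t, x t - z⟫
      ≤ ∑ t ∈ range T, (‖x t - z‖ ^ 2 - ‖x (t + 1) - z‖ ^ 2 + γ ^ 2 * ‖v t‖ ^ 2) := by
        rw [mul_sum]
        exact sum_le_sum fun t _ => hstep t
    _ = ‖x 0 - z‖ ^ 2 - ‖x T - z‖ ^ 2 + γ ^ 2 * ∑ t ∈ range T, ‖v t‖ ^ 2 := by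
        rw [sum_add_distrib, sum_range_sub', mul_sum]
    _ ≤ ‖x 0 - z‖ ^ 2 + γ ^ 2 * ∑ t ∈ range T, ‖v t‖ ^ 2 := by
        linarith [sq_nonneg ‖x T - z‖]

theorem sum_inner_le_diam_mul_sqrt_of_projected_iterates (hK : Convex ℝ K)
    (hKb : Bornology.IsBounded K)
    (hproj : ∀ y, proj y ∈ K ∧ ∀ z ∈ K, ‖y - proj y‖ ≤ ‖y - z‖)
    (hrec : ∀ t, x (t + 1) = proj (x t - γ • v t)) (hx0 : x 0 ∈ K)
    {L : ℝ} (hL : 0 < L) (hv : ∀ t, ‖v t‖ ≤ L) {T : ℕ}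
    (hγ : γ = Metric.diam K / (L * √T)) {z : F} (hz : z ∈ K) :
    ∑ t ∈ range T, ⟪v t, x t - z⟫ ≤ Metric.diam K * L * √T := by
  have hdist (t : ℕ) : ‖x t - z‖ ≤ Metric.diam K :=
    dist_eq_norm (x t) z ▸
      Metric.dist_le_diam_of_mem hKb (projected_iterates_mem hproj hrec hx0 t) hz
  -- If `diam K = 0` or `T = 0` then `γ = 0`, and the telescoped bound carries no information.
  rcases (Metric.diam_nonneg (s := K)).eq_or_lt with hD | hD
  · have hxz (t : ℕ) : x t - z = 0 := norm_le_zero_iff.mp (hD ▸ hdist t)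
    simp only [hxz, inner_zero_right, sum_const_zero]
    positivity
  rcases T.eq_zero_or_pos with rfl | hT
  · simp
  have hγ0 : 0 < γ := hγ ▸ by positivity
  have hvT : ∑ t ∈ range T, ‖v t‖ ^ 2 ≤ T * L ^ 2 := by
    simpa using sum_le_sum fun t (_ : t ∈ range T) => pow_le_pow_left₀ (norm_nonneg _) (hv t) 2
  have hγT : γ ^ 2 * (T * L ^ 2) = Metric.diam K ^ 2 := by
    rw [hγ, div_pow, mul_pow, Real.sq_sqrt (Nat.cast_nonneg T)]
    field_simp
  have hγD : Metric.diam K ^ 2 = γ * (Metric.diam K * L * √T) := by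
    rw [hγ]
    field_simp
  refine le_of_mul_le_mul_left ?_ (mul_pos two_pos hγ0)
  calc 2 * γ * ∑ t ∈ range T, ⟪v t, x t - z⟫
      ≤ ‖x 0 - z‖ ^ 2 + γ ^ 2 * ∑ t ∈ range T, ‖v t‖ ^ 2 :=
        two_mul_sum_inner_le_of_projected_iterates hK hproj hrec hz T
    _ ≤ Metric.diam K ^ 2 + γ ^ 2 * (T * L ^ 2) := by
        gcongr
        exact hdist 0
    _ = 2 * γ * (Metric.diam K * L * √T) := by linarith

end ProjectedGradientIterates

theorem ogd_worst_case_regret_general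
    {d : ℕ} (X : Set (EuclideanSpace ℝ (Fin d)))
    (hXcomp : IsCompact X) (hXcv : Convex ℝ X)
    (proj : EuclideanSpace ℝ (Fin d) → EuclideanSpace ℝ (Fin d))
    (hproj : ∀ y, proj y ∈ X ∧ ∀ z ∈ X, ‖y - proj y‖ ≤ ‖y - z‖)
    (T : ℕ) (ℓ : ℕ → EuclideanSpace ℝ (Fin d) → ℝ)
    (g : ℕ → EuclideanSpace ℝ (Fin d) → EuclideanSpace ℝ (Fin d))
    (hconv : ∀ t, ConvexOn ℝ X (ℓ t))
    (hgrad : ∀ t, ∀ z ∈ X, HasGradientWithinAt (ℓ t) (g t z) X z)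
    (L : ℝ) (hL : 0 < L) (hgb : ∀ t, ∀ z ∈ X, ‖g t z‖ ≤ L)
    (γ : ℝ) (hγ : γ = Metric.diam X / (L * Real.sqrt T))
    (x : ℕ → EuclideanSpace ℝ (Fin d)) (hx1 : x 0 ∈ X)
    (hrec : ∀ t, x (t + 1) = proj (x t - γ • g t (x t))) :
    ∑ t ∈ Finset.range T, ℓ t (x t) -
        sInf ((fun z => ∑ t ∈ Finset.range T, ℓ t z) '' X) ≤
      Metric.diam X * L * Real.sqrt T := by
  have hxX := projected_iterates_mem hproj hrec hx1
  rw [sub_le_comm]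
  refine le_csInf (Set.Nonempty.image _ ⟨x 0, hx1⟩) ?_
  rintro _ ⟨z, hz, rfl⟩
  rw [sub_le_comm]
  calc ∑ t ∈ range T, ℓ t (x t) - ∑ t ∈ range T, ℓ t z
      = ∑ t ∈ range T, (ℓ t (x t) - ℓ t z) := (sum_sub_distrib _ _).symm
    _ ≤ ∑ t ∈ range T, ⟪g t (x t), x t - z⟫ := sum_le_sum fun t _ =>
        (hconv t).sub_le_inner_of_hasGradientWithinAt (hxX t) hz (hgrad t _ (hxX t))
    _ ≤ Metric.diam X * L * √T :=
        sum_inner_le_diam_mul_sqrt_of_projected_iterates hXcv hXcomp.isBounded hproj hrec hx1 hL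
          (fun t => hgb t _ (hxX t)) hγ hz

/-- **Worst-case regret of online gradient descent (Zinkevich).**
Let `X ⊆ ℝ^d` be compact convex with Euclidean diameter `diam X`, and let
`ℓ₁, …, ℓ_T : X → ℝ` be convex and differentiable with `‖∇ℓ_t(x)‖ ≤ L` on `X`.  Then the
online gradient descent iterates `x_{t+1} = Π(x_t − γ ∇ℓ_t(x_t))` with step-size
`γ = diam(X)/(L√T)` satisfy `∑_t ℓ_t(x_t) − min_{x∈X} ∑_t ℓ_t(x) ≤ diam(X)·L·√T`. -/
theorem ogd_worst_case_regret
    {d : ℕ} (X : Set (EuclideanSpace ℝ (Fin d)))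
    (hXcomp : IsCompact X) (hXcv : Convex ℝ X) (hXne : X.Nonempty)
    (proj : EuclideanSpace ℝ (Fin d) → EuclideanSpace ℝ (Fin d))
    (hproj : ∀ y, proj y ∈ X ∧ ∀ z ∈ X, ‖y - proj y‖ ≤ ‖y - z‖)
    (T : ℕ) (ℓ : ℕ → EuclideanSpace ℝ (Fin d) → ℝ)
    (g : ℕ → EuclideanSpace ℝ (Fin d) → EuclideanSpace ℝ (Fin d))
    (hconv : ∀ t, ConvexOn ℝ X (ℓ t))
    (hgrad : ∀ t, ∀ z ∈ X, HasGradientWithinAt (ℓ t) (g t z) X z)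
    (L : ℝ) (hL : 0 < L) (hgb : ∀ t, ∀ z ∈ X, ‖g t z‖ ≤ L)
    (γ : ℝ) (hγ : γ = Metric.diam X / (L * Real.sqrt T))
    (x : ℕ → EuclideanSpace ℝ (Fin d)) (hx1 : x 0 ∈ X)
    (hrec : ∀ t, x (t + 1) = proj (x t - γ • g t (x t))) :
    ∑ t ∈ Finset.range T, ℓ t (x t) -
        sInf ((fun z => ∑ t ∈ Finset.range T, ℓ t z) '' X) ≤
      Metric.diam X * L * Real.sqrt T :=
  ogd_worst_case_regret_general X hXcomp hXcv proj hproj T ℓ g hconv hgrad L hL hgb γ hγ x hx1 hrec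
end

section
/- Let X ⊆ ℝ^d be a compact convex set of Euclidean diameter D containing two points at distance D, and let L > 0. For every deterministic online algorithm — i.e., every family of maps assigning to each history (v_1, …, v_{t−1}) a point x_t ∈ X — and every horizon T, there exists a sequence of vectors v_1, …, v_T ∈ ℝ^d with ‖v_t‖ ≤ L such that the linear losses ℓ_t(x) = −⟨v_t, x⟩ force regret R_T = Σ_{t=1}^T ℓ_t(x_t) − min_{x∈X} Σ_{t=1}^T ℓ_t(x) ≥ (D L / (2√2)) √T. -/
/-!
The adversary plays `v_t = ε_t w` with uniformly random signs `ε_t` and a vector `w`, `‖w‖ ≤ L`,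
with `⟪w, p - q⟫ = L D`. Measured against the midpoint `(p + q) / 2`, the algorithm's loss has mean
zero, because `x_t` is independent of `ε_t`; the comparator, playing the better of `p` and `q`,
beats the midpoint by `L D |S| / 2` where `S = Σ ε_t`. So the average regret over all sign
patterns is at least `L D E|S| / 2`, and `E|S_T| ≥ √(T / 2)` for the simple random walk, because
`E|S_{2m}| ≥ 2m C(2m, m) / 4^m` and `16^m ≤ 4m C(2m, m)²`. Some sign pattern does at least as well
as the average.
-/

open Finset RealInnerProductSpace

section SignPattern

variable {α : Type*} [DecidableEq α]

noncomputable def signOn (A : Finset α) (a : α) : ℝ := if a ∈ A then 1 else -1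

theorem abs_signOn (A : Finset α) (a : α) : |signOn A a| = 1 := by
  unfold signOn; split_ifs <;> simp

theorem signOn_insert_of_ne {A : Finset α} {a b : α} (h : b ≠ a) :
    signOn (insert a A) b = signOn A b := by
  simp [signOn, h]

theorem sum_signOn_of_subset {A s : Finset α} (h : A ⊆ s) :
    ∑ a ∈ s, signOn A a = 2 * #A - #s := by
  have hfilter : s.filter (· ∈ A) = A := by rw [filter_mem_eq_inter, inter_eq_right.2 h]
  have hsplit := card_filter_add_card_filter_not (s := s) (· ∈ A)
  rw [hfilter] at hsplit
  simp only [signOn, sum_ite, sum_const, hfilter, nsmul_eq_mul, mul_one, mul_neg]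
  rw [← hsplit]
  push_cast
  ring

/-- Flipping the sign at `a` pairs up the subsets of `s`, and `g` cannot see the flip. -/
theorem sum_powerset_signOn_mul_eq_zero {s : Finset α} {a : α} (ha : a ∈ s) (g : Finset α → ℝ)
    (hg : ∀ A ⊆ s.erase a, g (insert a A) = g A) :
    ∑ A ∈ s.powerset, signOn A a * g A = 0 := by
  rw [← insert_erase ha, sum_powerset_insert (notMem_erase a s), ← sum_add_distrib]
  refine sum_eq_zero fun A hA => ?_
  have hA := mem_powerset.1 hA
  have haA : a ∉ A := fun h => notMem_erase a s (hA h)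
  simp [signOn, haA, hg A hA]

end SignPattern

/-- `2 ^ n` times the mean absolute endpoint of the simple random walk of length `n`; the subset
`A ⊆ range n` encodes the walk that steps up exactly at the times in `A`. -/
noncomputable def absWalkSum (n : ℕ) : ℝ := ∑ A ∈ (range n).powerset, |∑ t ∈ range n, signOn A t|

theorem absWalkSum_eq (n : ℕ) : absWalkSum n = ∑ A ∈ (range n).powerset, |2 * (#A : ℝ) - n| :=
  sum_congr rfl fun A hA => by rw [sum_signOn_of_subset (mem_powerset.1 hA), card_range]

theorem abs_sub_one_add_abs_add_one (x : ℝ) : |x - 1| + |x + 1| = 2 * max |x| 1 := by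
  grind

theorem absWalkSum_succ (n : ℕ) :
    absWalkSum (n + 1) = 2 * ∑ A ∈ (range n).powerset, max |2 * (#A : ℝ) - n| 1 := by
  rw [absWalkSum_eq, range_add_one, sum_powerset_insert notMem_range_self, ← sum_add_distrib,
    mul_sum]
  refine sum_congr rfl fun A hA => ?_
  have hnA : n ∉ A := fun h => notMem_range_self (mem_powerset.1 hA h)
  rw [card_insert_of_notMem hnA, ← abs_sub_one_add_abs_add_one]
  push_cast
  ring_nf

theorem two_mul_absWalkSum_le_succ (n : ℕ) : 2 * absWalkSum n ≤ absWalkSum (n + 1) := by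
  rw [absWalkSum_succ, absWalkSum_eq]
  gcongr with A
  exact le_max_left _ _

theorem two_mul_absWalkSum_add_two_mul_centralBinom_le (m : ℕ) :
    2 * absWalkSum (2 * m) + 2 * m.centralBinom ≤ absWalkSum (2 * m + 1) := by
  have hcard : #((range (2 * m)).powerset.filter (#· = m)) = m.centralBinom := by
    rw [← powersetCard_eq_filter, card_powersetCard, card_range, Nat.centralBinom]
  rw [absWalkSum_succ, absWalkSum_eq, ← hcard, card_filter, ← mul_add, Nat.cast_sum,
    ← sum_add_distrib]
  gcongr with A
  split_ifs with hA
  · simp [hA]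
  · simp

theorem two_mul_mul_centralBinom_le_absWalkSum (m : ℕ) :
    2 * m * (m.centralBinom : ℝ) ≤ absWalkSum (2 * m) := by
  induction m with
  | zero => simp [absWalkSum]
  | succ m ih =>
    have hrec : ((m + 1 : ℕ) : ℝ) * (m + 1).centralBinom = 2 * (2 * m + 1) * m.centralBinom := by
      exact_mod_cast Nat.succ_mul_centralBinom_succ m
    have hodd := two_mul_absWalkSum_add_two_mul_centralBinom_le m
    have heven := two_mul_absWalkSum_le_succ (2 * m + 1)
    rw [show 2 * (m + 1) = 2 * m + 1 + 1 by ring]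
    push_cast at hrec ⊢
    linarith

theorem sixteen_pow_le_four_mul_mul_centralBinom_sq {m : ℕ} (hm : 1 ≤ m) :
    16 ^ m ≤ 4 * m * m.centralBinom ^ 2 := by
  induction m, hm using Nat.le_induction with
  | base => decide
  | succ m hm ih =>
    have hrec := Nat.succ_mul_centralBinom_succ m
    have key : (m + 1) * 16 ^ (m + 1) ≤ (m + 1) * (4 * (m + 1) * (m + 1).centralBinom ^ 2) := by
      calc (m + 1) * 16 ^ (m + 1) = (m + 1) * (16 * 16 ^ m) := by ring
        _ ≤ (m + 1) * (16 * (4 * m * m.centralBinom ^ 2)) := by gcongr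
        _ ≤ 4 * (2 * (2 * m + 1) * m.centralBinom) ^ 2 := by ring_nf; nlinarith
        _ = (m + 1) * (4 * (m + 1) * (m + 1).centralBinom ^ 2) := by rw [← hrec]; ring
    exact Nat.le_of_mul_le_mul_left key m.succ_pos

theorem sqrt_mul_le_of_mul_sq_le {x y z : ℝ} (hy : 0 ≤ y) (hz : 0 ≤ z) (h : x * y ^ 2 ≤ z ^ 2) :
    √x * y ≤ z := by
  rw [← Real.sqrt_sq hy, ← Real.sqrt_mul' x (sq_nonneg y)]
  exact (Real.sqrt_le_left hz).2 h

theorem sqrt_half_mul_two_pow_le_absWalkSum (n : ℕ) : √(n / 2) * 2 ^ n ≤ absWalkSum n := by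
  obtain ⟨m, rfl | rfl⟩ := Nat.even_or_odd' n
  · have hcb : (m : ℝ) * 16 ^ m ≤ m * (4 * m * m.centralBinom ^ 2) := by
      rcases m.eq_zero_or_pos with rfl | hm
      · simp
      · exact_mod_cast Nat.mul_le_mul_left m (sixteen_pow_le_four_mul_mul_centralBinom_sq hm)
    refine le_trans (sqrt_mul_le_of_mul_sq_le (by positivity) (by positivity) ?_)
      (two_mul_mul_centralBinom_le_absWalkSum m)
    rw [show ((2 : ℝ) ^ (2 * m)) ^ 2 = 16 ^ m by
      rw [← pow_mul, show 2 * m * 2 = 4 * m by ring, pow_mul]; norm_num]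
    push_cast
    linear_combination hcb
  · have hcb : (16 : ℝ) ^ m ≤ 2 * (2 * m + 1) * m.centralBinom ^ 2 := by
      rcases m.eq_zero_or_pos with rfl | hm
      · norm_num
      · calc (16 : ℝ) ^ m ≤ 4 * m * m.centralBinom ^ 2 := by
              exact_mod_cast sixteen_pow_le_four_mul_mul_centralBinom_sq hm
          _ ≤ 2 * (2 * m + 1) * m.centralBinom ^ 2 :=
              mul_le_mul_of_nonneg_right (by linarith) (sq_nonneg _)
    have hodd := two_mul_absWalkSum_add_two_mul_centralBinom_le m
    have heven := two_mul_mul_centralBinom_le_absWalkSum m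
    refine le_trans (sqrt_mul_le_of_mul_sq_le (z := 2 * (2 * m + 1) * m.centralBinom)
      (by positivity) (by positivity) ?_) (by linarith)
    rw [show ((2 : ℝ) ^ (2 * m + 1)) ^ 2 = 4 * 16 ^ m by
      rw [← pow_mul, show (2 * m + 1) * 2 = 2 + 4 * m by ring, pow_add, pow_mul]; norm_num]
    push_cast
    linear_combination (2 * (2 * m + 1) : ℝ) * hcb

section Regret

variable {E : Type*} [NormedAddCommGroup E] [InnerProductSpace ℝ E]

theorem exists_norm_le_inner_eq_mul_norm {L : ℝ} (hL : 0 ≤ L) (y : E) :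
    ∃ w : E, ‖w‖ ≤ L ∧ ⟪w, y⟫ = L * ‖y‖ := by
  rcases eq_or_ne y 0 with rfl | hy
  · exact ⟨0, by simpa using hL, by simp⟩
  · have hy' : ‖y‖ ≠ 0 := norm_ne_zero_iff.2 hy
    refine ⟨(L / ‖y‖) • y, ?_, ?_⟩
    · rw [norm_smul, Real.norm_of_nonneg (by positivity), div_mul_cancel₀ L hy']
    · rw [real_inner_smul_left, real_inner_self_eq_norm_sq]
      field_simp

noncomputable def linearRegret (X : Set E) (T : ℕ) (v x : ℕ → E) : ℝ :=
  ∑ t ∈ range T, -⟪v t, x t⟫ - sInf ((fun z => ∑ t ∈ range T, -⟪v t, z⟫) '' X)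

/-- The comparator does at least as well as the better of `p` and `q`, and
`max a b = (a + b) / 2 + |a - b| / 2`. -/
theorem linearRegret_smul_ge {X : Set E} (hX : IsCompact X) {p q : E} (hp : p ∈ X) (hq : q ∈ X)
    (T : ℕ) (σ : ℕ → ℝ) (w : E) (x : ℕ → E) :
    ∑ t ∈ range T, σ t * ((⟪w, p⟫ + ⟪w, q⟫) / 2 - ⟪w, x t⟫) +
        |∑ t ∈ range T, σ t| * |⟪w, p - q⟫| / 2 ≤
      linearRegret X T (fun t => σ t • w) x := by
  set S := ∑ t ∈ range T, σ t
  have hloss : ∀ z, ∑ t ∈ range T, -⟪σ t • w, z⟫ = -(S * ⟪w, z⟫) := fun z => by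
    simp only [real_inner_smul_left, S, sum_mul, sum_neg_distrib]
  have hbdd : BddBelow ((fun z => ∑ t ∈ range T, -⟪σ t • w, z⟫) '' X) :=
    (hX.image (by fun_prop)).bddBelow
  have hmin := le_min (csInf_le hbdd ⟨p, hp, rfl⟩) (csInf_le hbdd ⟨q, hq, rfl⟩)
  have hgap : |S * ⟪w, p⟫ - S * ⟪w, q⟫| = |S| * |⟪w, p - q⟫| := by
    rw [inner_sub_right, ← mul_sub, abs_mul]
  have hplayer : ∑ t ∈ range T, σ t * ((⟪w, p⟫ + ⟪w, q⟫) / 2 - ⟪w, x t⟫) =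
      S * ((⟪w, p⟫ + ⟪w, q⟫) / 2) + ∑ t ∈ range T, -⟪σ t • w, x t⟫ := by
    simp only [real_inner_smul_left, mul_sub, sum_sub_distrib, ← sum_mul, sum_neg_distrib, S]
    ring
  simp only [linearRegret, hloss] at hmin ⊢
  rw [hplayer, ← hgap]
  cases abs_cases (S * ⟪w, p⟫ - S * ⟪w, q⟫) <;>
    cases min_cases (-(S * ⟪w, p⟫)) (-(S * ⟪w, q⟫)) <;> linarith

theorem abs_inner_mul_absWalkSum_le_sum_linearRegret {X : Set E} (hX : IsCompact X) {p q : E}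
    (hp : p ∈ X) (hq : q ∈ X) (w : E) (alg : (t : ℕ) → (Fin t → E) → E) (T : ℕ) :
    |⟪w, p - q⟫| / 2 * absWalkSum T ≤
      ∑ A ∈ (range T).powerset,
        linearRegret X T (fun t => signOn A t • w) (fun t => alg t fun s => signOn A s • w) := by
  set c := (⟪w, p⟫ + ⟪w, q⟫) / 2
  have hcross : ∑ A ∈ (range T).powerset, ∑ t ∈ range T,
      signOn A t * (c - ⟪w, alg t fun s => signOn A s • w⟫) = 0 := by
    rw [sum_comm]
    refine sum_eq_zero fun t ht => sum_powerset_signOn_mul_eq_zero ht _ fun A _ => ?_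
    congr 4 with s
    rw [signOn_insert_of_ne s.isLt.ne]
  calc |⟪w, p - q⟫| / 2 * absWalkSum T
      = ∑ A ∈ (range T).powerset, (∑ t ∈ range T,
          signOn A t * (c - ⟪w, alg t fun s => signOn A s • w⟫) +
          |∑ t ∈ range T, signOn A t| * |⟪w, p - q⟫| / 2) := by
        rw [sum_add_distrib, hcross, zero_add, absWalkSum, mul_sum]
        exact sum_congr rfl fun A _ => by ring
    _ ≤ _ := sum_le_sum fun A _ => linearRegret_smul_ge hX hp hq T _ w _

end Regret

theorem online_linear_minimax_lower_bound_general
    {d : ℕ} (X : Set (EuclideanSpace ℝ (Fin d)))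
    (hXcomp : IsCompact X)
    (D L : ℝ) (hL : 0 < L)
    (hpts : ∃ p ∈ X, ∃ q ∈ X, dist p q = D)
    (alg : (t : ℕ) → (Fin t → EuclideanSpace ℝ (Fin d)) → EuclideanSpace ℝ (Fin d))
    (T : ℕ) :
    ∃ v : ℕ → EuclideanSpace ℝ (Fin d),
      (∀ t, ‖v t‖ ≤ L) ∧
      (∑ t ∈ Finset.range T, -(inner ℝ (v t) (alg t fun s => v ↑s) : ℝ)) -
          sInf ((fun z => ∑ t ∈ Finset.range T, -(inner ℝ (v t) z : ℝ)) '' X) ≥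
        D * L / (2 * Real.sqrt 2) * Real.sqrt T := by
  obtain ⟨p, hp, q, hq, rfl⟩ := hpts
  obtain ⟨w, hw, hwpq⟩ := exists_norm_le_inner_eq_mul_norm hL.le (p - q)
  have havg : ∑ _A ∈ (range T).powerset, dist p q * L / (2 * √2) * √T ≤
      ∑ A ∈ (range T).powerset,
        linearRegret X T (fun t => signOn A t • w) (fun t => alg t fun s => signOn A s • w) :=
    calc ∑ _A ∈ (range T).powerset, dist p q * L / (2 * √2) * √T
        = L * dist p q / 2 * (√(T / 2) * 2 ^ T) := by
          rw [sum_const, card_powerset, card_range, nsmul_eq_mul, Real.sqrt_div' _ zero_le_two]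
          push_cast
          field_simp
      _ ≤ |⟪w, p - q⟫| / 2 * absWalkSum T := by
          rw [hwpq, ← dist_eq_norm, abs_of_nonneg (by positivity)]
          gcongr
          exact sqrt_half_mul_two_pow_le_absWalkSum T
      _ ≤ _ := abs_inner_mul_absWalkSum_le_sum_linearRegret hXcomp hp hq w alg T
  obtain ⟨A, -, hA⟩ := exists_le_of_sum_le (powerset_nonempty _) havg
  refine ⟨fun t => signOn A t • w, fun t => ?_, hA⟩
  rw [norm_smul, Real.norm_eq_abs, abs_signOn, one_mul]
  exact hw

/-- **Minimax lower bound for online linear optimization (Abernethy et al.).**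
Let `X ⊆ ℝ^d` be compact convex with Euclidean diameter `D`, containing two points at
distance `D`, and let `L > 0`.  For every deterministic online algorithm (a family of maps
assigning to each history `(v_1, …, v_{t−1})` a point `x_t ∈ X`) and every horizon `T`,
there are vectors `v_t` with `‖v_t‖ ≤ L` such that the linear losses `ℓ_t(x) = −⟨v_t, x⟩`
force regret `R_T ≥ (D L/(2√2)) √T`. -/
theorem online_linear_minimax_lower_bound
    {d : ℕ} (X : Set (EuclideanSpace ℝ (Fin d)))
    (hXcomp : IsCompact X) (hXcv : Convex ℝ X)
    (D L : ℝ) (hL : 0 < L) (hD : Metric.diam X = D)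
    (hpts : ∃ p ∈ X, ∃ q ∈ X, dist p q = D)
    (alg : (t : ℕ) → (Fin t → EuclideanSpace ℝ (Fin d)) → EuclideanSpace ℝ (Fin d))
    (halg : ∀ t h, alg t h ∈ X) (T : ℕ) :
    ∃ v : ℕ → EuclideanSpace ℝ (Fin d),
      (∀ t, ‖v t‖ ≤ L) ∧
      (∑ t ∈ Finset.range T, -(inner ℝ (v t) (alg t fun s => v ↑s) : ℝ)) -
          sInf ((fun z => ∑ t ∈ Finset.range T, -(inner ℝ (v t) z : ℝ)) '' X) ≥
        D * L / (2 * Real.sqrt 2) * Real.sqrt T :=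
  online_linear_minimax_lower_bound_general X hXcomp D L hL hpts alg T
end

section
/- Let X ⊆ ℝ^d be compact and convex, let ‖·‖ be a norm on ℝ^d with dual norm ‖·‖_*, and let h : X → ℝ be a differentiable regularizer that is K-strongly convex with respect to ‖·‖. Let ℓ_1, …, ℓ_T : X → ℝ be convex and differentiable with ‖∇ℓ_t(x)‖_* ≤ L for all x ∈ X and all t. Then the online mirror descent iterates x_{t+1} ∈ argmin_{x∈X} { γ ⟨∇ℓ_t(x_t), x⟩ + D_h(x, x_t) }, run with step-size γ = L^{−1} √(2K (max_X h − min_X h)/T) from x_1 = argmin_X h, satisfy R_T = Σ_{t=1}^T ℓ_t(x_t) − min_{x∈X} Σ_{t=1}^T ℓ_t(x) ≤ 2 L √( (max_X h − min_X h) · T / (2K) ). -/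
/-!
Each mirror step is a constrained minimizer, so its first-order optimality condition together with
the three-point identity for Bregman divergences gives, for every comparator `z`,
`γ (ℓ_t(x_t) - ℓ_t(z)) ≤ γ²L²/(2K) + D_h(z, x_t) - D_h(z, x_{t+1})`: convexity of `ℓ_t` turns
the loss gap into `γ⟪∇ℓ_t(x_t), x_t - z⟫`, and the part
`γ⟪∇ℓ_t(x_t), x_t - x_{t+1}⟫ ≤ γ L ‖x_{t+1} - x_t‖` is paid for by the strong convexity term
`(K/2)‖x_{t+1} - x_t‖²`. The divergences telescope, and
`D_h(z, x_1) ≤ max h - min h` because `x_1` minimizes `h`; the step size balances the two terms.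
The only place finite dimension enters is that the unit ball of `‖·‖` is bounded, so that the
dual norm is a finite supremum.
-/

open scoped RealInnerProductSpace
open InnerProductSpace

namespace Seminorm

variable {E : Type*} [NormedAddCommGroup E] [NormedSpace ℝ E] [FiniteDimensional ℝ E]

theorem exists_pos_mul_norm_le (p : Seminorm ℝ E) (hp : ∀ z, p z = 0 → z = 0) :
    ∃ c > 0, ∀ z, c * ‖z‖ ≤ p z := by
  rcases subsingleton_or_nontrivial E with _ | _
  · exact ⟨1, one_pos, fun z => by simp [Subsingleton.elim z 0]⟩
  have hcont : Continuous p := continuousOn_univ.mp (p.convexOn.continuousOn isOpen_univ)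
  obtain ⟨w, hw, hmin⟩ := (isCompact_sphere (0 : E) 1).exists_isMinOn
    (NormedSpace.sphere_nonempty.mpr zero_le_one) hcont.continuousOn
  have hw1 : ‖w‖ = 1 := by simpa using hw
  have hpw : 0 < p w :=
    (apply_nonneg p w).lt_of_ne fun h => by simp [hp w h.symm] at hw1
  refine ⟨p w, hpw, fun z => ?_⟩
  rcases eq_or_ne z 0 with rfl | hz
  · simp
  have hz' : 0 < ‖z‖ := norm_pos_iff.mpr hz
  have hunit : ‖z‖⁻¹ • z ∈ Metric.sphere (0 : E) 1 := by
    simp [norm_smul, hz'.ne']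
  have := hmin hunit
  rw [Set.mem_ofPred_eq, map_smul_eq_mul, norm_inv, norm_norm] at this
  rw [mul_comm]
  calc ‖z‖ * p w ≤ ‖z‖ * (‖z‖⁻¹ * p z) := by gcongr
    _ = p z := by field_simp

end Seminorm

section DualNorm

variable {E : Type*} [NormedAddCommGroup E] [InnerProductSpace ℝ E] [FiniteDimensional ℝ E]

theorem inner_le_sSup_mul_seminorm (p : Seminorm ℝ E) (hp : ∀ z, p z = 0 → z = 0) (w v : E) :
    ⟪w, v⟫ ≤ sSup ((fun z => ⟪w, z⟫) '' {z | p z ≤ 1}) * p v := by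
  obtain ⟨c, hc, hcp⟩ := p.exists_pos_mul_norm_le hp
  have hbdd : BddAbove ((fun z => ⟪w, z⟫) '' {z | p z ≤ 1}) := by
    refine ⟨‖w‖ * c⁻¹, ?_⟩
    rintro _ ⟨u, hu, rfl⟩
    have hu' : ‖u‖ ≤ c⁻¹ := by
      rw [← one_div, le_div_iff₀' hc]
      exact (hcp u).trans hu
    calc ⟪w, u⟫ ≤ ‖w‖ * ‖u‖ := real_inner_le_norm w u
      _ ≤ ‖w‖ * c⁻¹ := by gcongr
  rcases (apply_nonneg p v).eq_or_lt with hv | hv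
  · simp [hp v hv.symm]
  have hunit : p ((p v)⁻¹ • v) ≤ 1 := by
    rw [map_smul_eq_mul, norm_inv, Real.norm_of_nonneg hv.le, inv_mul_cancel₀ hv.ne']
  calc ⟪w, v⟫ = ⟪w, (p v)⁻¹ • v⟫ * p v := by
        rw [real_inner_smul_right]; field_simp
    _ ≤ _ := by gcongr; exact le_csSup hbdd ⟨_, hunit, rfl⟩

end DualNorm

section Gradient

variable {E : Type*} [NormedAddCommGroup E] [InnerProductSpace ℝ E] [CompleteSpace E]
  {X : Set E} {f : E → ℝ} {g a z : E}

theorem IsMinOn.inner_gradient_nonneg (hmin : IsMinOn f X a) (hf : HasGradientWithinAt f g X a)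
    (hX : Convex ℝ X) (ha : a ∈ X) (hz : z ∈ X) : 0 ≤ ⟪g, z - a⟫ := by
  simpa using hmin.localize.hasFDerivWithinAt_nonneg hf.hasFDerivWithinAt
    (sub_mem_posTangentConeAt_of_segment_subset (hX.segment_subset ha hz))

theorem ConvexOn.add_inner_gradient_le (hf : ConvexOn ℝ X f) (hg : HasGradientWithinAt f g X a)
    (ha : a ∈ X) (hz : z ∈ X) : f a + ⟪g, z - a⟫ ≤ f z := by
  set c := AffineMap.lineMap (k := ℝ) a z
  have hc0 : c 0 = a := AffineMap.lineMap_apply_zero a z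
  have hderiv : HasDerivWithinAt (f ∘ c) ⟪g, z - a⟫ (c ⁻¹' X) 0 := by
    have := hg.hasFDerivWithinAt.comp_hasDerivWithinAt_of_eq (0 : ℝ)
      AffineMap.hasDerivWithinAt_lineMap (Set.mapsTo_preimage c X) hc0.symm
    simpa using this
  have := (hf.comp_affineMap c).le_slope_of_hasDerivWithinAt (x := 0) (y := 1)
    (by simpa [Set.mem_preimage, hc0] using ha) (by simpa [c] using hz) one_pos hderiv
  simp only [slope_def_field, Function.comp_apply, AffineMap.lineMap_apply_one, hc0, sub_zero,
    div_one, c] at this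
  linarith

end Gradient

section Bregman

variable {E : Type*} [NormedAddCommGroup E] [InnerProductSpace ℝ E]

def bregmanDiv (h : E → ℝ) (gh : E → E) (p x : E) : ℝ := h p - h x - ⟪gh x, p - x⟫

theorem bregmanDiv_three_point (h : E → ℝ) (gh : E → E) (z x x' : E) :
    bregmanDiv h gh z x - bregmanDiv h gh z x' - bregmanDiv h gh x' x = ⟪gh x' - gh x, z - x'⟫ := by
  simp only [bregmanDiv, inner_sub_left, inner_sub_right]
  ring

end Bregman

section MirrorDescent

variable {E : Type*} [NormedAddCommGroup E] [InnerProductSpace ℝ E] [CompleteSpace E]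
  {X : Set E} {h : E → ℝ} {gh : E → E}

theorem HasGradientWithinAt.inner_add_bregmanDiv {x x' : E}
    (hh : HasGradientWithinAt h (gh x') X x') (γ : ℝ) (v : E) :
    HasGradientWithinAt (fun w => γ * ⟪v, w⟫ + bregmanDiv h gh w x)
      (γ • v + (gh x' - gh x)) X x' := by
  rw [hasGradientWithinAt_iff_hasFDerivWithinAt] at hh ⊢
  have hlin (u : E) : HasFDerivWithinAt (fun w => ⟪u, w⟫) (toDual ℝ E u) X x' :=
    (toDual ℝ E u).hasFDerivWithinAt
  have hfun : (fun w => γ * ⟪v, w⟫ + bregmanDiv h gh w x) =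
      fun w => γ * ⟪v, w⟫ + ((h w - h x) - (⟪gh x, w⟫ - ⟪gh x, x⟫)) := by
    funext w; simp only [bregmanDiv, inner_sub_right]
  rw [hfun, map_add, map_sub, map_smul]
  exact ((hlin v).const_mul γ).add ((hh.sub_const (h x)).sub ((hlin (gh x)).sub_const _))

theorem bregmanDiv_le_sub_of_isMinOn {a z : E} (hmin : IsMinOn h X a)
    (hh : HasGradientWithinAt h (gh a) X a) (hX : Convex ℝ X) (ha : a ∈ X) (hz : z ∈ X) :
    bregmanDiv h gh z a ≤ h z - h a := by
  have := hmin.inner_gradient_nonneg hh hX ha hz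
  rw [bregmanDiv]
  linarith

theorem mirror_step_inner_le {γ : ℝ} {v x x' z : E} (hX : Convex ℝ X)
    (hmin : IsMinOn (fun w => γ * ⟪v, w⟫ + bregmanDiv h gh w x) X x')
    (hh : HasGradientWithinAt h (gh x') X x') (hx' : x' ∈ X) (hz : z ∈ X) :
    γ * ⟪v, x' - z⟫ ≤ bregmanDiv h gh z x - bregmanDiv h gh z x' - bregmanDiv h gh x' x := by
  have := hmin.inner_gradient_nonneg (hh.inner_add_bregmanDiv γ v) hX hx' hz
  rw [inner_add_left, real_inner_smul_left, ← bregmanDiv_three_point] at this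
  rw [← neg_sub z x', inner_neg_right]
  linarith

theorem mirror_step_le {N : Seminorm ℝ E} {K L γ : ℝ} {f : E → ℝ} {v x x' z : E}
    (hX : Convex ℝ X) (hK : 0 < K) (hγ : 0 ≤ γ) (hf : ConvexOn ℝ X f)
    (hfv : HasGradientWithinAt f v X x) (hvL : ∀ u, ⟪v, u⟫ ≤ L * N u)
    (hstrong : K / 2 * N (x' - x) ^ 2 ≤ bregmanDiv h gh x' x)
    (hmin : IsMinOn (fun w => γ * ⟪v, w⟫ + bregmanDiv h gh w x) X x')
    (hh : HasGradientWithinAt h (gh x') X x') (hx : x ∈ X) (hx' : x' ∈ X) (hz : z ∈ X) :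
    γ * (f x - f z) ≤ γ ^ 2 * L ^ 2 / (2 * K) + (bregmanDiv h gh z x - bregmanDiv h gh z x') := by
  have hconv : f x - f z ≤ ⟪v, x - z⟫ := by
    have := hf.add_inner_gradient_le hfv hx hz
    rw [← neg_sub x z, inner_neg_right] at this
    linarith
  have hsplit : ⟪v, x - z⟫ = ⟪v, x - x'⟫ + ⟪v, x' - z⟫ := by
    rw [← inner_add_right, sub_add_sub_cancel]
  have hdual : ⟪v, x - x'⟫ ≤ L * N (x' - x) := map_sub_rev N x x' ▸ hvL _
  -- AM-GM absorbs the dual-norm term into the strong-convexity term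
  have hamgm : γ * (L * N (x' - x)) - K / 2 * N (x' - x) ^ 2 ≤ γ ^ 2 * L ^ 2 / (2 * K) := by
    rw [le_div_iff₀ (by positivity)]
    nlinarith [sq_nonneg (K * N (x' - x) - γ * L)]
  calc γ * (f x - f z) ≤ γ * ⟪v, x - x'⟫ + γ * ⟪v, x' - z⟫ := by
        rw [← mul_add, ← hsplit]; exact mul_le_mul_of_nonneg_left hconv hγ
    _ ≤ γ * (L * N (x' - x)) +
          (bregmanDiv h gh z x - bregmanDiv h gh z x' - bregmanDiv h gh x' x) :=
        add_le_add (mul_le_mul_of_nonneg_left hdual hγ) (mirror_step_inner_le hX hmin hh hx' hz)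
    _ ≤ _ := by linarith

theorem mirror_descent_regret_le {N : Seminorm ℝ E} {K L γ : ℝ} {ℓ : ℕ → E → ℝ}
    {g : ℕ → E → E} {x : ℕ → E} {z : E} (hX : Convex ℝ X) (hK : 0 < K) (hγ : 0 ≤ γ)
    (hgh : ∀ w ∈ X, HasGradientWithinAt h (gh w) X w)
    (hstrong : ∀ w ∈ X, ∀ w' ∈ X, K / 2 * N (w' - w) ^ 2 ≤ bregmanDiv h gh w' w)
    (hconv : ∀ t, ConvexOn ℝ X (ℓ t)) (hgrad : ∀ t, ∀ w ∈ X, HasGradientWithinAt (ℓ t) (g t w) X w)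
    (hgL : ∀ t, ∀ w ∈ X, ∀ u, ⟪g t w, u⟫ ≤ L * N u) (hxX : ∀ t, x t ∈ X)
    (hx0 : IsMinOn h X (x 0))
    (hmin : ∀ t, IsMinOn (fun w => γ * ⟪g t (x t), w⟫ + bregmanDiv h gh w (x t)) X (x (t + 1)))
    (hz : z ∈ X) (T : ℕ) :
    γ * ∑ t ∈ Finset.range T, (ℓ t (x t) - ℓ t z) ≤
      T * (γ ^ 2 * L ^ 2 / (2 * K)) + (h z - h (x 0)) := by
  have hstep (t : ℕ) : γ * (ℓ t (x t) - ℓ t z) ≤ γ ^ 2 * L ^ 2 / (2 * K) +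
      (bregmanDiv h gh z (x t) - bregmanDiv h gh z (x (t + 1))) :=
    mirror_step_le hX hK hγ (hconv t) (hgrad t _ (hxX t)) (hgL t _ (hxX t))
      (hstrong _ (hxX t) _ (hxX (t + 1))) (hmin t) (hgh _ (hxX (t + 1))) (hxX t) (hxX (t + 1)) hz
  have hfirst := bregmanDiv_le_sub_of_isMinOn hx0 (hgh _ (hxX 0)) hX (hxX 0) hz
  have hlast : 0 ≤ bregmanDiv h gh z (x T) := (hstrong _ (hxX T) _ hz).trans' (by positivity)
  calc γ * ∑ t ∈ Finset.range T, (ℓ t (x t) - ℓ t z)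
      ≤ ∑ t ∈ Finset.range T, (γ ^ 2 * L ^ 2 / (2 * K) +
          (bregmanDiv h gh z (x t) - bregmanDiv h gh z (x (t + 1)))) := by
        rw [Finset.mul_sum]; exact Finset.sum_le_sum fun t _ => hstep t
    _ = T * (γ ^ 2 * L ^ 2 / (2 * K)) + (bregmanDiv h gh z (x 0) - bregmanDiv h gh z (x T)) := by
        rw [Finset.sum_add_distrib, Finset.sum_const, Finset.card_range, nsmul_eq_mul,
          Finset.sum_range_sub' (fun t => bregmanDiv h gh z (x t))]
    _ ≤ _ := by linarith

theorem IsMinOn.eq_of_le {N : Seminorm ℝ E} (hN : ∀ u, N u = 0 → u = 0) {K : ℝ} (hK : 0 < K)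
    {a z : E} (hmin : IsMinOn h X a) (hh : HasGradientWithinAt h (gh a) X a) (hX : Convex ℝ X)
    (ha : a ∈ X) (hz : z ∈ X) (hstrong : K / 2 * N (z - a) ^ 2 ≤ bregmanDiv h gh z a)
    (hle : h z ≤ h a) : z = a := by
  have := bregmanDiv_le_sub_of_isMinOn hmin hh hX ha hz
  have hsq : N (z - a) ^ 2 = 0 := le_antisymm (by nlinarith) (sq_nonneg _)
  exact sub_eq_zero.mp (hN _ (pow_eq_zero_iff two_ne_zero |>.mp hsq))

end MirrorDescent

theorem le_two_mul_sqrt_of_mul_le {R D K L T γ : ℝ} (hD : 0 < D) (hK : 0 < K) (hL : 0 < L)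
    (hT : 0 < T) (hγ : γ = L⁻¹ * √(2 * K * D / T))
    (hR : γ * R ≤ T * (γ ^ 2 * L ^ 2 / (2 * K)) + D) :
    R ≤ 2 * L * √(D * T / (2 * K)) := by
  set s := √(D * T / (2 * K))
  have hs : 0 < s := Real.sqrt_pos.mpr (by positivity)
  have hDT : D * T = 2 * K * s ^ 2 := by
    rw [Real.sq_sqrt (by positivity)]; field_simp
  have hγs : γ = D / (L * s) := by
    rw [hγ, Real.sqrt_eq_iff_mul_self_eq_of_pos (div_pos hD hs) |>.mpr]
    · field_simp
    · field_simp
      linear_combination hDT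
  rw [hγs] at hR
  field_simp at hR
  refine le_of_mul_le_mul_left ?_ (by positivity : 0 < 2 * K * s)
  linear_combination hR + L * hDT

/-- **Worst-case regret of online mirror descent.**
Let `X ⊆ ℝ^d` be compact convex, let `N` be a norm on `ℝ^d` with dual norm
`Nd v = sup{⟨v, z⟩ : N z ≤ 1}`, and let `h : X → ℝ` be a differentiable regularizer which is
`K`-strongly convex w.r.t. `N`.  Let `ℓ₁, …, ℓ_T : X → ℝ` be convex and differentiable with
`Nd(∇ℓ_t(x)) ≤ L` on `X`.  Then the online mirror descent iterates
`x_{t+1} ∈ argmin_{x∈X} {γ⟨∇ℓ_t(x_t), x⟩ + D_h(x, x_t)}`, run with step-size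
`γ = L⁻¹ √(2K(max_X h − min_X h)/T)` from `x₁ = argmin_X h`, satisfy
`R_T ≤ 2L √((max_X h − min_X h)·T/(2K))`. -/
theorem omd_worst_case_regret
    {d : ℕ} (X : Set (EuclideanSpace ℝ (Fin d)))
    (hXcomp : IsCompact X) (hXcv : Convex ℝ X) (hXne : X.Nonempty)
    -- `N` is a norm on ℝ^d, with dual norm `Nd`
    (N : EuclideanSpace ℝ (Fin d) → ℝ)
    (hN_add : ∀ z w, N (z + w) ≤ N z + N w)
    (hN_smul : ∀ (c : ℝ) z, N (c • z) = |c| * N z)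
    (hN_eq_zero : ∀ z, N z = 0 ↔ z = 0)
    (Nd : EuclideanSpace ℝ (Fin d) → ℝ)
    (hNd : ∀ w, Nd w = sSup ((fun z => (inner ℝ w z : ℝ)) '' {z | N z ≤ 1}))
    -- the regularizer `h`, differentiable with gradient `gh`, `K`-strongly convex w.r.t. `N`
    (h : EuclideanSpace ℝ (Fin d) → ℝ)
    (gh : EuclideanSpace ℝ (Fin d) → EuclideanSpace ℝ (Fin d))
    (hgh : ∀ z ∈ X, HasGradientWithinAt h (gh z) X z)
    (K : ℝ) (hK : 0 < K)
    (hstrong : ∀ z ∈ X, ∀ w ∈ X,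
      h w ≥ h z + (inner ℝ (gh z) (w - z) : ℝ) + (K / 2) * (N (w - z)) ^ 2)
    -- the losses, convex and differentiable with gradients `g` bounded in dual norm by `L`
    (T : ℕ) (ℓ : ℕ → EuclideanSpace ℝ (Fin d) → ℝ)
    (g : ℕ → EuclideanSpace ℝ (Fin d) → EuclideanSpace ℝ (Fin d))
    (hconv : ∀ t, ConvexOn ℝ X (ℓ t))
    (hgrad : ∀ t, ∀ z ∈ X, HasGradientWithinAt (ℓ t) (g t z) X z)
    (L : ℝ) (hL : 0 < L) (hgb : ∀ t, ∀ z ∈ X, Nd (g t z) ≤ L)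
    -- the step-size
    (γ : ℝ)
    (hγ : γ = L⁻¹ * Real.sqrt (2 * K * (sSup (h '' X) - sInf (h '' X)) / T))
    -- the online mirror descent iterates
    (x : ℕ → EuclideanSpace ℝ (Fin d))
    (hx1 : x 0 ∈ X ∧ ∀ z ∈ X, h (x 0) ≤ h z)
    (hrec : ∀ t, x (t + 1) ∈ X ∧ ∀ z ∈ X,
      γ * (inner ℝ (g t (x t)) (x (t + 1)) : ℝ) +
          (h (x (t + 1)) - h (x t) - (inner ℝ (gh (x t)) (x (t + 1) - x t) : ℝ)) ≤
        γ * (inner ℝ (g t (x t)) z : ℝ) +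
          (h z - h (x t) - (inner ℝ (gh (x t)) (z - x t) : ℝ))) :
    ∑ t ∈ Finset.range T, ℓ t (x t) -
        sInf ((fun z => ∑ t ∈ Finset.range T, ℓ t z) '' X) ≤
      2 * L * Real.sqrt ((sSup (h '' X) - sInf (h '' X)) * T / (2 * K)) := by
  let p : Seminorm ℝ (EuclideanSpace ℝ (Fin d)) := Seminorm.of N hN_add hN_smul
  have hp (u) : p u = 0 → u = 0 := (hN_eq_zero u).1
  have hxX (t : ℕ) : x t ∈ X := t.casesOn hx1.1 fun t => (hrec t).1
  have hgL (t) (z) (hz : z ∈ X) (u) : ⟪g t z, u⟫ ≤ L * p u := calc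
    ⟪g t z, u⟫ ≤ Nd (g t z) * p u := by rw [hNd]; exact inner_le_sSup_mul_seminorm p hp _ u
    _ ≤ L * p u := mul_le_mul_of_nonneg_right (hgb t z hz) (apply_nonneg p u)
  have hstrong' (z) (hz : z ∈ X) (w) (hw : w ∈ X) :
      K / 2 * p (w - z) ^ 2 ≤ bregmanDiv h gh w z := by
    show K / 2 * N (w - z) ^ 2 ≤ _
    rw [bregmanDiv]; linarith [hstrong z hz w hw]
  have hx0 : IsMinOn h X (x 0) := isMinOn_iff.mpr hx1.2
  have himg : IsCompact (h '' X) :=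
    hXcomp.image_of_continuousOn fun z hz => (hgh z hz).continuousWithinAt
  have hspread (z) (hz : z ∈ X) : h z - h (x 0) ≤ sSup (h '' X) - sInf (h '' X) :=
    sub_le_sub (le_csSup himg.bddAbove ⟨z, hz, rfl⟩) (csInf_le himg.bddBelow ⟨_, hx1.1, rfl⟩)
  rw [sub_le_comm]
  refine le_csInf (hXne.image _) ?_
  rintro _ ⟨z, hz, rfl⟩
  rw [sub_le_comm, ← Finset.sum_sub_distrib]
  rcases Nat.eq_zero_or_pos T with rfl | hT
  · simp
  rcases ((sub_self _).symm.trans_le (hspread _ hx1.1)).eq_or_lt with hD | hD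
  · have hX1 (w) (hw : w ∈ X) : w = x 0 := hx0.eq_of_le hp hK (hgh _ hx1.1) hXcv hx1.1 hw
      (hstrong' _ hx1.1 w hw) (by linarith [hspread w hw])
    simp only [hX1 z hz, hX1 _ (hxX _), sub_self, Finset.sum_const_zero]
    positivity
  have hγ0 : 0 ≤ γ := by rw [hγ]; positivity
  have hregret := mirror_descent_regret_le hXcv hK hγ0 hgh hstrong' hconv hgrad hgL hxX hx0
    (fun t => isMinOn_iff.mpr (hrec t).2) hz T
  exact le_two_mul_sqrt_of_mul_le hD hK hL (by exact_mod_cast hT) hγ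
    (hregret.trans (by linarith [hspread z hz]))
end

section
/- The negative Gibbs–Shannon entropy h(x) = Σ_{j=1}^d x_j log x_j is 1-strongly convex on the probability simplex Δ(d) = {x ∈ ℝ^d : x_j ≥ 0, Σ_j x_j = 1} with respect to the ℓ¹-norm: for all x, y in the (relative) interior of Δ(d), h(y) ≥ h(x) + ⟨∇h(x), y − x⟩ + (1/2) ‖y − x‖₁², where ‖z‖₁ = Σ_j |z_j|. -/
open Real Finset InformationTheory

/-!
The Bregman divergence of `h` is the Kullback–Leibler divergence `∑ x_j klFun (y_j / x_j)`, so the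
claim is Pinsker's inequality. It follows from the scalar bound `3 (t - 1)² ≤ (2t + 4) klFun t`
(the difference vanishes at `t = 1` and has derivative `4 ((t + 1) log t - 2 (t - 1))`, a monotone
function vanishing at `1`) applied to `t = y_j / x_j`, followed by Cauchy–Schwarz with the weights
`(2 y_j + 4 x_j) / 3`, whose sum is `2`.
-/

lemma isMinOn_Ioi_of_hasDerivAt {f f' : ℝ → ℝ} {a c : ℝ} (hac : a < c)
    (hf : ∀ t, a < t → HasDerivAt f (f' t) t)
    (hf'_nonpos : ∀ t, a < t → t < c → f' t ≤ 0) (hf'_nonneg : ∀ t, c < t → 0 ≤ f' t) :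
    IsMinOn f (Set.Ioi a) c := by
  intro t (hat : a < t)
  have hcont : ∀ u v, a < u → ContinuousOn f (Set.Icc u v) := fun u v hau s hs =>
    (hf s (hau.trans_le hs.1)).continuousAt.continuousWithinAt
  rcases le_total t c with htc | hct
  · refine antitoneOn_of_hasDerivWithinAt_nonpos (f' := f') (convex_Icc t c) (hcont t c hat)
      (fun s hs => ?_) (fun s hs => ?_) ⟨le_rfl, htc⟩ ⟨htc, le_rfl⟩ htc
    all_goals rw [interior_Icc] at hs
    · exact (hf s (hat.trans hs.1)).hasDerivWithinAt
    · exact hf'_nonpos s (hat.trans hs.1) hs.2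
  · refine monotoneOn_of_hasDerivWithinAt_nonneg (f' := f') (convex_Icc c t) (hcont c t hac)
      (fun s hs => ?_) (fun s hs => ?_) ⟨le_rfl, hct⟩ ⟨hct, le_rfl⟩ hct
    all_goals rw [interior_Icc] at hs
    · exact (hf s (hac.trans hs.1)).hasDerivWithinAt
    · exact hf'_nonneg s hs.1

lemma hasDerivAt_add_one_mul_log_sub {t : ℝ} (ht : 0 < t) :
    HasDerivAt (fun t => (t + 1) * log t - 2 * (t - 1)) (klFun t / t) t := by
  have := (((hasDerivAt_id' t).add_const 1).mul (hasDerivAt_log ht.ne')).sub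
    (((hasDerivAt_id' t).sub_const 1).const_mul 2)
  exact this.congr_deriv (by rw [klFun_apply]; field_simp; ring)

lemma monotoneOn_add_one_mul_log_sub :
    MonotoneOn (fun t => (t + 1) * log t - 2 * (t - 1)) (Set.Ioi 0) := by
  refine monotoneOn_of_hasDerivWithinAt_nonneg (f' := fun t => klFun t / t) (convex_Ioi 0)
    (fun t ht => (hasDerivAt_add_one_mul_log_sub ht).continuousAt.continuousWithinAt)
    (fun t ht => ?_) (fun t ht => ?_)
  all_goals rw [interior_Ioi] at ht
  · exact (hasDerivAt_add_one_mul_log_sub ht).hasDerivWithinAt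
  · exact div_nonneg (klFun_nonneg ht.le) ht.le

lemma three_mul_sq_sub_one_le_mul_klFun {t : ℝ} (ht : 0 < t) :
    3 * (t - 1) ^ 2 ≤ (2 * t + 4) * klFun t := by
  set φ := fun t : ℝ => (t + 1) * log t - 2 * (t - 1)
  have hφ_one : φ 1 = 0 := by simp [φ]
  have hφ : MonotoneOn φ (Set.Ioi 0) := monotoneOn_add_one_mul_log_sub
  have h_one : (1 : ℝ) ∈ Set.Ioi 0 := Set.mem_Ioi.2 one_pos
  have hderiv : ∀ s, 0 < s →
      HasDerivAt (fun t => (2 * t + 4) * klFun t - 3 * (t - 1) ^ 2) (4 * φ s) s := by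
    intro s hs
    have := ((((hasDerivAt_id' s).const_mul 2).add_const 4).mul (hasDerivAt_klFun hs.ne')).sub
      ((((hasDerivAt_id' s).sub_const 1).pow 2).const_mul 3)
    exact this.congr_deriv (by simp only [φ, klFun_apply]; ring)
  have hmin := isMinOn_Ioi_of_hasDerivAt one_pos hderiv
    (fun s hs hs1 => by linarith [hφ hs h_one hs1.le])
    (fun s hs1 => by linarith [hφ h_one (one_pos.trans hs1) hs1.le]) ht
  simpa [klFun_one] using hmin

lemma mul_klFun_div_eq {a b : ℝ} (ha : a ≠ 0) (hb : b ≠ 0) :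
    b * klFun (a / b) = a * log a - b * log b - (1 + log b) * (a - b) := by
  rw [klFun_apply, log_div ha hb]
  field_simp
  ring

lemma three_mul_sq_sub_le {a b : ℝ} (ha : 0 < a) (hb : 0 < b) :
    3 * (a - b) ^ 2 ≤ (2 * a + 4 * b) * (b * klFun (a / b)) := by
  have h := mul_le_mul_of_nonneg_left (three_mul_sq_sub_one_le_mul_klFun (div_pos ha hb))
    (sq_nonneg b)
  calc 3 * (a - b) ^ 2 = b ^ 2 * (3 * (a / b - 1) ^ 2) := by field_simp
    _ ≤ b ^ 2 * ((2 * (a / b) + 4) * klFun (a / b)) := h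
    _ = (2 * a + 4 * b) * (b * klFun (a / b)) := by field_simp

lemma three_mul_sq_sum_abs_sub_le {ι : Type*} (s : Finset ι) {x y : ι → ℝ}
    (hx : ∀ i ∈ s, 0 < x i) (hy : ∀ i ∈ s, 0 < y i) :
    3 * (∑ i ∈ s, |y i - x i|) ^ 2 ≤
      (2 * ∑ i ∈ s, y i + 4 * ∑ i ∈ s, x i) * ∑ i ∈ s, x i * klFun (y i / x i) := by
  have h := sum_sq_le_sum_mul_sum_of_sq_le_mul s (r := fun i => |y i - x i|)
    (f := fun i => (2 * y i + 4 * x i) / 3) (g := fun i => x i * klFun (y i / x i))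
    (fun i hi => by have := hx i hi; have := hy i hi; positivity)
    (fun i hi => mul_nonneg (hx i hi).le (klFun_nonneg (div_pos (hy i hi) (hx i hi)).le))
    (fun i hi => by
      have := three_mul_sq_sub_le (hy i hi) (hx i hi)
      rw [sq_abs]
      linarith)
  rw [← sum_div, sum_add_distrib, ← mul_sum, ← mul_sum] at h
  linarith

/-- **The negative Gibbs–Shannon entropy is 1-strongly convex on the simplex w.r.t. the ℓ¹-norm.**
For all points `x, y` in the relative interior of the probability simplex `Δ(d)`
(i.e. with strictly positive coordinates summing to one),
`h(y) ≥ h(x) + ⟨∇h(x), y − x⟩ + (1/2)‖y − x‖₁²`, where `h(z) = ∑_j z_j log z_j` and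
`∇h(x) = (1 + log x_j)_j`. -/
theorem entropy_one_strongly_convex_l1
    (d : ℕ) (x y : Fin d → ℝ)
    (hxpos : ∀ j, 0 < x j) (hxsum : ∑ j, x j = 1)
    (hypos : ∀ j, 0 < y j) (hysum : ∑ j, y j = 1) :
    ∑ j, y j * Real.log (y j) ≥
      (∑ j, x j * Real.log (x j)) +
        (∑ j, (1 + Real.log (x j)) * (y j - x j)) +
        (1 / 2) * (∑ j, |y j - x j|) ^ 2 := by
  have h := three_mul_sq_sum_abs_sub_le univ (fun j _ => hxpos j) (fun j _ => hypos j)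
  simp only [mul_klFun_div_eq (hypos _).ne' (hxpos _).ne', sum_sub_distrib, hxsum, hysum] at h
  linarith
end
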